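/- arXiv:1505.03687 — 2 statements merged into one kernel-verified Lean document; each statement's English description precedes it below -/
import Mathlib

section
/- The constant function f = 1 generates an extreme ray of the Erdahl cone: if g, h ∈ Erdahl(n) satisfy g + h = 1 (as functions), then g and h are both nonnegative constant functions. -/
open scoped Matrix

/-- `f` is a polynomial function of degree at most 2 on `ℝⁿ`. -/
def IsDeg2 {n : ℕ} (f : (Fin n → ℝ) → ℝ) : Prop :=
  ∃ (c : ℝ) (b : Fin n → ℝ) (Q : Matrix (Fin n) (Fin n) ℝ),
    Q.IsSymm ∧ ∀ x, f x = c + 2 * (b ⬝ᵥ x) + x ⬝ᵥ (Q *ᵥ x)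

/-- `x ∈ ℝⁿ` is an integral point, i.e. belongs to `ℤⁿ`. -/
def IntPt {n : ℕ} (x : Fin n → ℝ) : Prop := ∀ i, ∃ m : ℤ, x i = m

/-- The Erdahl cone: degree at most 2 polynomial functions nonnegative on `ℤⁿ`. -/
def Erdahl (n : ℕ) : Set ((Fin n → ℝ) → ℝ) :=
  {f | IsDeg2 f ∧ ∀ x, IntPt x → 0 ≤ f x}

/-!
If `g + h = 1` with `g, h` nonnegative on `ℤⁿ`, then `0 ≤ g ≤ 1` on `ℤⁿ`. Along a
line `m ↦ m • x` through an integral point `x`, `g` is the quadratic polynomial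
`c + 2 (b ⬝ x) m + (x ⬝ Q x) m²`, and a quadratic bounded on `ℤ` has vanishing linear and quadratic
coefficients. So `b` and the quadratic form of `Q` vanish on `ℤⁿ`, which forces `b = 0` and, by
polarization, `Q = 0`: `g` is constant, and so is `h = 1 - g`.
-/

lemma eq_zero_of_forall_abs_mul_natCast_le {a M : ℝ} (h : ∀ m : ℕ, |a| * m ≤ M) : a = 0 := by
  by_contra ha
  obtain ⟨m, hm⟩ := exists_nat_gt (M / |a|)
  have := h m
  have := (div_lt_iff₀ (abs_pos.mpr ha)).mp hm
  linarith

lemma quadratic_coeffs_eq_zero_of_bounded_on_int {A B c M : ℝ}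
    (h : ∀ m : ℤ, |c + B * m + A * m ^ 2| ≤ M) : A = 0 ∧ B = 0 := by
  have hsym (m : ℕ) : |c + B * m + A * m ^ 2| ≤ M ∧ |c - B * m + A * m ^ 2| ≤ M := by
    have := h (-m)
    push_cast at this
    exact ⟨mod_cast h m, by ring_nf at this ⊢; exact this⟩
  -- The even and odd parts of `m ↦ c + B m + A m²` are `c + A m²` and `B m`.
  have hA (m : ℕ) : |A| * m ≤ M + |c| := by
    obtain ⟨hp, hn⟩ := hsym m
    have hm : (m : ℝ) ≤ (m : ℝ) ^ 2 := mod_cast Nat.le_self_pow two_ne_zero m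
    calc |A| * m ≤ |A| * m ^ 2 := by gcongr
      _ = |A * m ^ 2| := by rw [abs_mul, abs_pow, Nat.abs_cast]
      _ = |((c + B * m + A * m ^ 2) + (c - B * m + A * m ^ 2)) / 2 - c| := by ring_nf
      _ ≤ M + |c| := by
          rw [abs_le] at hp hn ⊢
          constructor <;> linarith [neg_abs_le c, le_abs_self c]
  have hB (m : ℕ) : |B| * m ≤ M := by
    obtain ⟨hp, hn⟩ := hsym m
    calc |B| * m = |B * m| := by rw [abs_mul, Nat.abs_cast]
      _ = |((c + B * m + A * m ^ 2) - (c - B * m + A * m ^ 2)) / 2| := by ring_nf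
      _ ≤ M := by
          rw [abs_le] at hp hn ⊢
          constructor <;> linarith
  exact ⟨eq_zero_of_forall_abs_mul_natCast_le hA, eq_zero_of_forall_abs_mul_natCast_le hB⟩

namespace IntPt

variable {n : ℕ}

lemma zero : IntPt (0 : Fin n → ℝ) := fun _ => ⟨0, by simp⟩

lemma single (i : Fin n) : IntPt (Pi.single i (1 : ℝ)) := by
  intro k
  by_cases hk : k = i
  · exact ⟨1, by simp [hk]⟩
  · exact ⟨0, by simp [hk]⟩

lemma add {x y : Fin n → ℝ} (hx : IntPt x) (hy : IntPt y) : IntPt (x + y) := by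
  intro i
  obtain ⟨a, ha⟩ := hx i
  obtain ⟨b, hb⟩ := hy i
  exact ⟨a + b, by simp [ha, hb]⟩

lemma intCast_smul {x : Fin n → ℝ} (hx : IntPt x) (m : ℤ) : IntPt ((m : ℝ) • x) := by
  intro i
  obtain ⟨a, ha⟩ := hx i
  exact ⟨m * a, by simp [ha]⟩

end IntPt

lemma eq_zero_of_dotProduct_intPt_eq_zero {n : ℕ} {b : Fin n → ℝ}
    (hb : ∀ x, IntPt x → b ⬝ᵥ x = 0) : b = 0 := by
  funext i
  simpa using hb _ (IntPt.single i)

lemma Matrix.IsSymm.eq_zero_of_quadForm_intPt_eq_zero {n : ℕ} {Q : Matrix (Fin n) (Fin n) ℝ}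
    (hQ : Q.IsSymm) (hQ0 : ∀ x, IntPt x → x ⬝ᵥ (Q *ᵥ x) = 0) : Q = 0 := by
  have hdiag (i : Fin n) : Q i i = 0 := by
    simpa [Matrix.mulVec_single_one, single_dotProduct] using hQ0 _ (IntPt.single i)
  ext i j
  have hpol := hQ0 _ ((IntPt.single i).add (IntPt.single j))
  simp only [add_dotProduct, Matrix.mulVec_add, dotProduct_add, Matrix.mulVec_single_one,
    single_dotProduct, Matrix.col_apply, one_mul, hdiag] at hpol
  have hji : Q j i = Q i j := hQ.apply i j
  simp only [Matrix.zero_apply]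
  linarith

lemma quadratic_apply_smul {n : ℕ} (c : ℝ) (b : Fin n → ℝ) (Q : Matrix (Fin n) (Fin n) ℝ)
    (x : Fin n → ℝ) (t : ℝ) :
    c + 2 * (b ⬝ᵥ (t • x)) + (t • x) ⬝ᵥ (Q *ᵥ (t • x)) =
      c + 2 * (b ⬝ᵥ x) * t + (x ⬝ᵥ (Q *ᵥ x)) * t ^ 2 := by
  rw [Matrix.mulVec_smul, dotProduct_smul, smul_dotProduct, dotProduct_smul]
  simp only [smul_eq_mul]
  ring

lemma IsDeg2.exists_const_of_bounded_on_intPt {n : ℕ} {f : (Fin n → ℝ) → ℝ} (hf : IsDeg2 f)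
    {M : ℝ} (hM : ∀ x, IntPt x → |f x| ≤ M) : ∃ c, ∀ x, f x = c := by
  obtain ⟨c, b, Q, hQ, hf⟩ := hf
  have hline (x : Fin n → ℝ) (hx : IntPt x) : x ⬝ᵥ (Q *ᵥ x) = 0 ∧ 2 * (b ⬝ᵥ x) = 0 :=
    quadratic_coeffs_eq_zero_of_bounded_on_int fun m => by
      have := hM _ (hx.intCast_smul m)
      rwa [hf, quadratic_apply_smul] at this
  have hb : b = 0 := eq_zero_of_dotProduct_intPt_eq_zero fun x hx => by
    linarith [(hline x hx).2]
  have hQ0 : Q = 0 := hQ.eq_zero_of_quadForm_intPt_eq_zero fun x hx => (hline x hx).1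
  exact ⟨c, fun x => by simp [hf, hb, hQ0]⟩

lemma exists_nonneg_const_of_mem_erdahl_of_le_one {n : ℕ} {f : (Fin n → ℝ) → ℝ}
    (hf : f ∈ Erdahl n) (hf1 : ∀ x, IntPt x → f x ≤ 1) : ∃ c : ℝ, 0 ≤ c ∧ ∀ x, f x = c := by
  obtain ⟨hdeg, hf0⟩ := hf
  obtain ⟨c, hc⟩ := hdeg.exists_const_of_bounded_on_intPt (M := 1) fun x hx =>
    abs_le.mpr ⟨by linarith [hf0 x hx], hf1 x hx⟩
  exact ⟨c, hc 0 ▸ hf0 0 IntPt.zero, hc⟩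

/-- The constant function `1` generates an extreme ray of the Erdahl cone. -/
theorem const_one_extreme_ray (n : ℕ) (g h : (Fin n → ℝ) → ℝ)
    (hg : g ∈ Erdahl n) (hh : h ∈ Erdahl n)
    (hsum : ∀ x, g x + h x = 1) :
    (∃ cg : ℝ, 0 ≤ cg ∧ ∀ x, g x = cg) ∧ (∃ ch : ℝ, 0 ≤ ch ∧ ∀ x, h x = ch) :=
  ⟨exists_nonneg_const_of_mem_erdahl_of_le_one hg fun x hx => by linarith [hsum x, hh.2 x hx],
    exists_nonneg_const_of_mem_erdahl_of_le_one hh fun x hx => by linarith [hsum x, hg.2 x hx]⟩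
end

section
/- Let D ⊆ ℤ^n be a set of the form D = P + L where P is finite and L ⊆ ℤ^n is a subgroup, and suppose f ∈ Erdahl(n) satisfies Z(f) = D (f vanishes exactly on D among integer points). Then for every z ∈ L: Quad(f)[z] = 0 and Lin(f)·z = 0; in particular L ⊆ ker Quad(f). -/
open scoped Matrix

/-- The real point corresponding to an integral point. -/
def realPt {n : ℕ} (x : Fin n → ℤ) : Fin n → ℝ := fun i => (x i : ℝ)

theorem isotropy_lattice_in_kernel (n : ℕ) (P : Finset (Fin n → ℤ))
    (hP : P.Nonempty) (L : AddSubgroup (Fin n → ℤ))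
    (c : ℝ) (b : Fin n → ℝ) (Q : Matrix (Fin n) (Fin n) ℝ) (hQ : Q.IsSymm)
    (f : (Fin n → ℝ) → ℝ)
    (hf : ∀ x, f x = c + 2 * (b ⬝ᵥ x) + x ⬝ᵥ (Q *ᵥ x))
    (hnonneg : ∀ x : Fin n → ℝ, IntPt x → 0 ≤ f x)
    (hZ : ∀ x : Fin n → ℤ, f (realPt x) = 0 ↔ ∃ p ∈ P, ∃ l ∈ L, x = p + l) :
    ∀ z ∈ L, realPt z ⬝ᵥ (Q *ᵥ realPt z) = 0 ∧ b ⬝ᵥ realPt z = 0 ∧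
      Q *ᵥ realPt z = 0 := by
  intro z hz
  set rz := realPt z with hrz
  -- symmetry
  have symm_dot : ∀ u w : Fin n → ℝ, u ⬝ᵥ (Q *ᵥ w) = w ⬝ᵥ (Q *ᵥ u) := by
    intro u w
    rw [Matrix.dotProduct_mulVec, ← Matrix.mulVec_transpose, hQ.eq,
      dotProduct_comm]
  -- expansion of f along direction rz
  have expand : ∀ (v : Fin n → ℝ) (t : ℝ),
      f (v + t • rz) = f v + t * (2 * (b ⬝ᵥ rz) + 2 * (v ⬝ᵥ (Q *ᵥ rz)))
        + t ^ 2 * (rz ⬝ᵥ (Q *ᵥ rz)) := by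
    intro v t
    have h1 := symm_dot rz v
    simp only [hf, Matrix.mulVec_add, Matrix.mulVec_smul, dotProduct_add,
      add_dotProduct, dotProduct_smul, smul_dotProduct,
      smul_eq_mul]
    linear_combination t * h1
  -- realPt of x + k • z
  have hreal : ∀ (x : Fin n → ℤ) (k : ℤ),
      realPt (x + k • z) = realPt x + (k : ℝ) • rz := by
    intro x k
    funext i
    simp only [realPt, hrz, Pi.add_apply, Pi.smul_apply, smul_eq_mul]
    push_cast
    ring
  -- zero set closed under translation by multiples of z
  have key : ∀ x : Fin n → ℤ, f (realPt x) = 0 → ∀ k : ℤ,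
      f (realPt x + (k : ℝ) • rz) = 0 := by
    intro x hx k
    rw [← hreal]
    rw [hZ] at hx ⊢
    obtain ⟨p, hp, l, hl, hxl⟩ := hx
    exact ⟨p, hp, l + k • z, add_mem hl (zsmul_mem hz k), by rw [hxl]; abel⟩
  -- pick p ∈ P; it is a zero of f
  obtain ⟨p, hp⟩ := hP
  have hp0 : f (realPt p) = 0 := (hZ p).2 ⟨p, hp, 0, zero_mem L, by simp⟩
  -- quadratic vanishing at 0, 1, -1 : leading coeff is 0
  have h1 := key p hp0 1
  have h2 := key p hp0 (-1)
  rw [expand, hp0] at h1 h2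
  push_cast at h1 h2
  have hA : rz ⬝ᵥ (Q *ᵥ rz) = 0 := by nlinarith [h1, h2]
  -- linear slope vanishes for every integer point x
  have slope : ∀ x : Fin n → ℤ,
      2 * (b ⬝ᵥ rz) + 2 * (realPt x ⬝ᵥ (Q *ᵥ rz)) = 0 := by
    intro x
    set B : ℝ := 2 * (b ⬝ᵥ rz) + 2 * (realPt x ⬝ᵥ (Q *ᵥ rz)) with hB
    set C : ℝ := f (realPt x) with hC
    have hC0 : 0 ≤ C := hnonneg _ (fun i => ⟨x i, rfl⟩)
    have hlin : ∀ k : ℤ, 0 ≤ C + (k : ℝ) * B := by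
      intro k
      have := hnonneg (realPt x + (k : ℝ) • rz) (by
        rw [← hreal]
        exact fun i => ⟨(x + k • z) i, rfl⟩)
      rw [expand, hA] at this
      rw [hB, hC]
      linarith [this]
    by_contra hB0
    rcases lt_or_gt_of_ne hB0 with hneg | hpos
    · -- B < 0 : take k large positive
      have hk := hlin ⌈(C + 1) / (-B)⌉
      have h1 : (C + 1) / (-B) ≤ (⌈(C + 1) / (-B)⌉ : ℝ) := Int.le_ceil _
      have h2 : C + 1 ≤ (⌈(C + 1) / (-B)⌉ : ℝ) * (-B) := by
        rw [div_le_iff₀ (by linarith : (0:ℝ) < -B)] at h1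
        linarith
      nlinarith
    · -- B > 0 : take k large negative
      have hk := hlin (-⌈(C + 1) / B⌉)
      have h1 : (C + 1) / B ≤ (⌈(C + 1) / B⌉ : ℝ) := Int.le_ceil _
      have h2 : C + 1 ≤ (⌈(C + 1) / B⌉ : ℝ) * B := by
        rw [div_le_iff₀ hpos] at h1
        linarith
      push_cast at hk
      nlinarith
  -- b ⬝ᵥ rz = 0 from x = 0
  have hb : b ⬝ᵥ rz = 0 := by
    have := slope 0
    have h0 : realPt (0 : Fin n → ℤ) = 0 := by funext i; simp [realPt]
    rw [h0] at this
    simp [zero_dotProduct] at this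
    linarith [this]
  -- Q *ᵥ rz = 0 from x = single i 1
  have hQz : Q *ᵥ rz = 0 := by
    funext i
    have := slope (Pi.single i 1)
    have hs : realPt (Pi.single i (1 : ℤ)) = Pi.single i (1 : ℝ) := by
      funext j
      by_cases h : j = i <;> simp [realPt, Pi.single_apply, h]
    rw [hs, hb] at this
    simpa [single_dotProduct] using this
  exact ⟨hA, hb, hQz⟩
end
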